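/- arXiv:0804.2458 — 5 statements merged into one kernel-verified Lean document; each statement's English description precedes it below -/
import Mathlib

section
/- The energy functional Q(π) = (1/2) sup_{H ∈ C_c^∞} { 2∫∫ π ∂_u H − ∫∫ H² χ₀(π) } is lower semicontinuous with respect to weak-* convergence of π in L^∞((0,T)×(-1,1);[0,1]) (equivalently, convergence ∫∫ πₙ G → ∫∫ π G for all continuous G). -/
open MeasureTheory Set Filter Topology

noncomputable section

def ΩT (T : ℝ) : Set (ℝ × ℝ) := Ioo 0 T ×ˢ Ioo (-1 : ℝ) 1

def IsTest (T : ℝ) (G : ℝ × ℝ → ℝ) : Prop :=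
  ContDiff ℝ (⊤ : ℕ∞) G ∧ HasCompactSupport G ∧ tsupport G ⊆ ΩT T

def pderivU (G : ℝ × ℝ → ℝ) (p : ℝ × ℝ) : ℝ := deriv (fun v => G (p.1, v)) p.2

def energy (T : ℝ) (π : ℝ × ℝ → ℝ) : EReal :=
  ⨆ H : {H : ℝ × ℝ → ℝ // IsTest T H},
    (((∫ p in ΩT T, π p * pderivU H.1 p)
      - (1/2) * ∫ p in ΩT T, (H.1 p)^2 * (π p * (1 - π p)) : ℝ) : EReal)

lemma ereal_le_of_forall (x : ℝ) (y : EReal)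
    (h : ∀ ε : ℝ, 0 < ε → ((x - ε : ℝ) : EReal) ≤ y) : (x : EReal) ≤ y := by
  by_contra hc
  push_neg at hc
  induction y using EReal.rec with
  | bot => exact EReal.coe_ne_bot _ (le_bot_iff.1 (h 1 one_pos))
  | coe r =>
      have hrx : r < x := by exact_mod_cast hc
      have h2 := h ((x - r)/2) (by linarith)
      rw [EReal.coe_le_coe_iff] at h2
      linarith
  | top => exact not_top_lt hc

lemma clamp_lip (a b : ℝ) : |max 0 (min 1 a) - max 0 (min 1 b)| ≤ |a - b| := by
  calc |max 0 (min 1 a) - max 0 (min 1 b)|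
      = |max (min 1 a) 0 - max (min 1 b) 0| := by rw [max_comm, max_comm (min 1 b)]
    _ ≤ |min 1 a - min 1 b| := abs_max_sub_max_le_abs _ _ _
    _ ≤ |a - b| := by simpa using abs_min_sub_min_le_max 1 a 1 b

set_option maxHeartbeats 1600000 in
/-- the energy functional `Q` is lower semicontinuous with respect to
weak convergence `∫∫ πₙ G → ∫∫ π G` for all continuous `G`. -/
theorem stmt2 (T : ℝ) (hT : 0 < T) (πseq : ℕ → ℝ × ℝ → ℝ) (πlim : ℝ × ℝ → ℝ)
    (hm : ∀ n, Measurable (πseq n)) (hlm : Measurable πlim)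
    (hrange : ∀ n p, πseq n p ∈ Icc (0:ℝ) 1) (hlrange : ∀ p, πlim p ∈ Icc (0:ℝ) 1)
    (hconv : ∀ G : ℝ × ℝ → ℝ, Continuous G →
      Tendsto (fun n => ∫ p in ΩT T, πseq n p * G p) atTop
        (𝓝 (∫ p in ΩT T, πlim p * G p))) :
    energy T πlim ≤ liminf (fun n => energy T (πseq n)) atTop := by
  have hΩmeas : MeasurableSet (ΩT T) := measurableSet_Ioo.prod measurableSet_Ioo
  have hΩvol : volume (ΩT T) < ⊤ := by
    have h : volume (ΩT T) = volume (Ioo (0:ℝ) T) * volume (Ioo (-1:ℝ) 1) := by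
      rw [ΩT, ← Measure.prod_prod, ← Measure.volume_eq_prod]
    rw [h, Real.volume_Ioo, Real.volume_Ioo]
    exact ENNReal.mul_lt_top ENNReal.ofReal_lt_top ENNReal.ofReal_lt_top
  haveI : IsFiniteMeasure (volume.restrict (ΩT T)) :=
    ⟨by rwa [Measure.restrict_apply_univ]⟩
  have hint : ∀ f : ℝ × ℝ → ℝ, AEStronglyMeasurable f (volume.restrict (ΩT T)) →
      ∀ C : ℝ, (∀ p, |f p| ≤ C) → Integrable f (volume.restrict (ΩT T)) := by
    intro f hf C hC
    exact (integrable_const C).mono' hf (ae_of_all _ fun p => by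
      simpa [Real.norm_eq_abs] using hC p)
  refine iSup_le ?_
  rintro ⟨H, hHs, hHc, hHsupp⟩
  -- the u-derivative of H
  set D : ℝ × ℝ → ℝ := fun p => fderiv ℝ H p ((0:ℝ),(1:ℝ)) with hDdef
  have hDeq : pderivU H = D := by
    funext p
    have hH' : HasFDerivAt H (fderiv ℝ H p) p := (hHs.differentiable (by simp) p).hasFDerivAt
    have hcurve : HasDerivAt (fun v : ℝ => ((p.1, v) : ℝ × ℝ)) ((0:ℝ),(1:ℝ)) p.2 :=
      (hasDerivAt_const p.2 p.1).prodMk (hasDerivAt_id p.2)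
    have h3 := hH'.comp_hasDerivAt p.2 (by simpa using hcurve)
    exact h3.deriv
  have hDcont : Continuous D :=
    (ContinuousLinearMap.apply ℝ ℝ ((0:ℝ),(1:ℝ))).continuous.comp (hHs.continuous_fderiv (by simp))
  have hDsupp : HasCompactSupport D := hHc.fderiv_apply ℝ ((0:ℝ),(1:ℝ))
  obtain ⟨M', hM'⟩ : ∃ C, ∀ p, |D p| ≤ C := by
    simpa [Real.norm_eq_abs] using hDcont.bounded_above_of_compact_support hDsupp
  obtain ⟨M, hM⟩ : ∃ C, ∀ p, |H p| ≤ C := by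
    simpa [Real.norm_eq_abs] using hHs.continuous.bounded_above_of_compact_support hHc
  have hM0 : 0 ≤ M := le_trans (abs_nonneg _) (hM (0,0))
  have hH2 : ∀ p, (H p)^2 ≤ M^2 := fun p => by
    rw [← sq_abs]; exact pow_le_pow_left₀ (abs_nonneg _) (hM p) 2
  -- abbreviation for the energy term
  set A : (ℝ × ℝ → ℝ) → ℝ := fun π =>
    (∫ p in ΩT T, π p * pderivU H p) -
      (1/2) * ∫ p in ΩT T, (H p)^2 * (π p * (1 - π p)) with hAdef
  show ((A πlim : ℝ) : EReal) ≤ _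
  refine ereal_le_of_forall _ _ ?_
  intro ε0 hε0
  -- approximate πlim in L¹ by a continuous [0,1]-valued function c
  set f : ℝ × ℝ → ℝ := (ΩT T).indicator πlim with hfdef
  have hπl1 : ∀ p, |πlim p| ≤ 1 := fun p =>
    abs_le.2 ⟨by linarith [(hlrange p).1], (hlrange p).2⟩
  have hfrange : ∀ p, f p ∈ Icc (0:ℝ) 1 := by
    intro p
    by_cases hp : p ∈ ΩT T
    · simpa [hfdef, indicator_of_mem hp] using hlrange p
    · simp [hfdef, indicator_of_notMem hp]
  have hfint : Integrable f volume := by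
    rw [hfdef, integrable_indicator_iff hΩmeas]
    exact hint πlim hlm.aestronglyMeasurable 1 hπl1
  set δ : ℝ := ε0 / (M^2 + 1) with hδdef
  have hδ : 0 < δ := div_pos hε0 (by positivity)
  obtain ⟨g, hgsupp, hgL1, hgcont, hgint⟩ := hfint.exists_hasCompactSupport_integral_sub_le hδ
  set c : ℝ × ℝ → ℝ := fun p => max 0 (min 1 (g p)) with hcdef
  have hccont : Continuous c := continuous_const.max (continuous_const.min hgcont)
  have hcrange : ∀ p, c p ∈ Icc (0:ℝ) 1 := fun p =>
    ⟨le_max_left _ _, max_le zero_le_one (min_le_left _ _)⟩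
  have hcsupp : HasCompactSupport c :=
    hgsupp.comp_left (g := fun x : ℝ => max 0 (min 1 x)) (by norm_num)
  have hclose : ∀ p, |f p - c p| ≤ |f p - g p| := by
    intro p
    have hfix : f p = max 0 (min 1 (f p)) := by
      obtain ⟨h1, h2⟩ := hfrange p
      rw [min_eq_right h2, max_eq_right h1]
    calc |f p - c p| = |max 0 (min 1 (f p)) - max 0 (min 1 (g p))| := by rw [← hfix]
      _ ≤ |f p - g p| := clamp_lip _ _
  -- continuous linearization kernel
  set W : ℝ × ℝ → ℝ := fun p => (H p)^2 * (1 - 2 * c p) with hWdef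
  have hWcont : Continuous W :=
    (hHs.continuous.pow 2).mul (continuous_const.sub (continuous_const.mul hccont))
  have hWbd : ∀ p, |W p| ≤ M^2 := by
    intro p
    rw [hWdef, abs_mul, abs_of_nonneg (sq_nonneg (H p))]
    have h1 : |1 - 2 * c p| ≤ 1 := by
      obtain ⟨h1, h2⟩ := hcrange p
      rw [abs_le]; constructor <;> linarith
    calc (H p)^2 * |1 - 2 * c p| ≤ M^2 * 1 :=
          mul_le_mul (hH2 p) h1 (abs_nonneg _) (by positivity)
      _ = M^2 := mul_one _
  set G : ℝ × ℝ → ℝ := fun p => D p - (1/2) * W p with hGdef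
  have hGcont : Continuous G := hDcont.sub (continuous_const.mul hWcont)
  set K : ℝ := (1/2) * ∫ p in ΩT T, (H p)^2 * (c p)^2 with hKdef
  set L : (ℝ × ℝ → ℝ) → ℝ := fun π => (∫ p in ΩT T, π p * G p) - K with hLdef
  set R : (ℝ × ℝ → ℝ) → ℝ := fun π => ∫ p in ΩT T, (H p)^2 * (π p - c p)^2 with hRdef
  -- the key algebraic identity
  have key : ∀ π : ℝ × ℝ → ℝ, Measurable π → (∀ p, π p ∈ Icc (0:ℝ) 1) →
      A π = L π + (1/2) * R π := by
    intro π hπm hπr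
    have hπ1 : ∀ p, |π p| ≤ 1 := fun p => abs_le.2 ⟨by linarith [(hπr p).1], (hπr p).2⟩
    have iD : Integrable (fun p => π p * D p) (volume.restrict (ΩT T)) := by
      refine hint _ ((hπm.mul hDcont.measurable).aestronglyMeasurable) (1 * M') ?_
      intro p
      rw [abs_mul]
      exact mul_le_mul (hπ1 p) (hM' p) (abs_nonneg _) zero_le_one
    have iW : Integrable (fun p => π p * W p) (volume.restrict (ΩT T)) := by
      refine hint _ ((hπm.mul hWcont.measurable).aestronglyMeasurable) (1 * M^2) ?_
      intro p
      rw [abs_mul]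
      exact mul_le_mul (hπ1 p) (hWbd p) (abs_nonneg _) zero_le_one
    have iB : Integrable (fun p => (H p)^2 * (π p * (1 - π p))) (volume.restrict (ΩT T)) := by
      refine hint _ (((hHs.continuous.pow 2).measurable.mul
        (hπm.mul (measurable_const.sub hπm))).aestronglyMeasurable) (M^2 * 1) ?_
      intro p
      rw [abs_mul, abs_of_nonneg (sq_nonneg (H p))]
      refine mul_le_mul (hH2 p) ?_ (abs_nonneg _) (by positivity)
      obtain ⟨h1, h2⟩ := hπr p
      rw [abs_le]; constructor <;> nlinarith
    have iC : Integrable (fun p => (H p)^2 * (c p)^2) (volume.restrict (ΩT T)) := by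
      refine hint _ ((hHs.continuous.pow 2).mul (hccont.pow 2)).aestronglyMeasurable (M^2 * 1) ?_
      intro p
      rw [abs_mul, abs_of_nonneg (sq_nonneg (H p)), abs_of_nonneg (sq_nonneg (c p))]
      refine mul_le_mul (hH2 p) ?_ (sq_nonneg _) (by positivity)
      obtain ⟨h1, h2⟩ := hcrange p
      nlinarith
    have iR : Integrable (fun p => (H p)^2 * (π p - c p)^2) (volume.restrict (ΩT T)) := by
      refine hint _ (((hHs.continuous.pow 2).measurable.mul
        ((hπm.sub hccont.measurable).pow_const 2)).aestronglyMeasurable) (M^2 * 1) ?_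
      intro p
      rw [abs_mul, abs_of_nonneg (sq_nonneg (H p)), abs_of_nonneg (sq_nonneg _)]
      refine mul_le_mul (hH2 p) ?_ (sq_nonneg _) (by positivity)
      obtain ⟨h1, h2⟩ := hπr p
      obtain ⟨h3, h4⟩ := hcrange p
      nlinarith
    have e1 : (∫ p in ΩT T, π p * G p) =
        (∫ p in ΩT T, π p * D p) - (1/2) * ∫ p in ΩT T, π p * W p := by
      have : (∫ p in ΩT T, π p * G p)
          = ∫ p in ΩT T, (π p * D p - (1/2) * (π p * W p)) := by
        refine integral_congr_ae (ae_of_all _ fun p => ?_)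
        simp only [hGdef]; ring
      rw [this, integral_sub iD (iW.const_mul (1/2)), integral_const_mul]
    have e2 : (∫ p in ΩT T, (H p)^2 * (π p * (1 - π p)))
        + (∫ p in ΩT T, (H p)^2 * (π p - c p)^2)
        = (∫ p in ΩT T, π p * W p) + ∫ p in ΩT T, (H p)^2 * (c p)^2 := by
      rw [← integral_add iB iR, ← integral_add iW iC]
      refine integral_congr_ae (ae_of_all _ fun p => ?_)
      simp only [hWdef]; ring
    simp only [hAdef, hLdef, hRdef, hKdef, hDeq, e1]
    linarith
  -- L is weakly continuous along the sequence
  have hTend : Tendsto (fun n => ((L (πseq n) : ℝ) : EReal)) atTop (𝓝 ((L πlim : ℝ) : EReal)) := by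
    rw [EReal.tendsto_coe]
    simpa only [hLdef] using (hconv G hGcont).sub_const K
  -- each term of the liminf dominates L (πseq n)
  have hLle : ∀ n, ((L (πseq n) : ℝ) : EReal) ≤ energy T (πseq n) := by
    intro n
    have hR0 : 0 ≤ R (πseq n) := by
      refine integral_nonneg fun p => ?_
      positivity
    have h1 : L (πseq n) ≤ A (πseq n) := by
      rw [key (πseq n) (hm n) (hrange n)]; linarith
    calc ((L (πseq n) : ℝ) : EReal) ≤ ((A (πseq n) : ℝ) : EReal) := by
          exact_mod_cast h1
      _ ≤ energy T (πseq n) := by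
          exact le_iSup (fun H' : {H // IsTest T H} =>
            (((∫ p in ΩT T, πseq n p * pderivU H'.1 p)
              - (1/2) * ∫ p in ΩT T, (H'.1 p)^2 * (πseq n p * (1 - πseq n p)) : ℝ) : EReal))
            ⟨H, hHs, hHc, hHsupp⟩
  have hliminf : ((L πlim : ℝ) : EReal) ≤ liminf (fun n => energy T (πseq n)) atTop := by
    rw [← hTend.liminf_eq]
    exact liminf_le_liminf (Eventually.of_forall hLle)
  -- the remainder at the limit is at most ε0
  have hRsmall : (1/2) * R πlim ≤ ε0 := by
    have hcl1 : ∀ p, |πlim p - c p| ≤ 1 := by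
      intro p
      obtain ⟨h1, h2⟩ := hlrange p
      obtain ⟨h3, h4⟩ := hcrange p
      rw [abs_le]; constructor <;> linarith
    have ptw : ∀ p, (H p)^2 * (πlim p - c p)^2 ≤ M^2 * |πlim p - c p| := by
      intro p
      have h1 : (πlim p - c p)^2 ≤ |πlim p - c p| := by
        rw [← sq_abs]
        nlinarith [hcl1 p, abs_nonneg (πlim p - c p)]
      exact mul_le_mul (hH2 p) h1 (sq_nonneg _) (by positivity)
    have iR : Integrable (fun p => (H p)^2 * (πlim p - c p)^2) (volume.restrict (ΩT T)) := by
      refine hint _ (((hHs.continuous.pow 2).measurable.mul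
        ((hlm.sub hccont.measurable).pow_const 2)).aestronglyMeasurable) (M^2 * 1) ?_
      intro p
      rw [abs_mul, abs_of_nonneg (sq_nonneg (H p)), abs_of_nonneg (sq_nonneg _)]
      refine mul_le_mul (hH2 p) ?_ (sq_nonneg _) (by positivity)
      rw [← sq_abs]
      nlinarith [hcl1 p, abs_nonneg (πlim p - c p)]
    have iAbs : Integrable (fun p => |πlim p - c p|) (volume.restrict (ΩT T)) := by
      refine hint _ ((hlm.sub hccont.measurable).abs.aestronglyMeasurable) 1 ?_
      intro p
      rw [abs_abs]
      exact hcl1 p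
    have step1 : R πlim ≤ M^2 * ∫ p in ΩT T, |πlim p - c p| := by
      have hre : R πlim = ∫ p in ΩT T, (H p)^2 * (πlim p - c p)^2 := rfl
      rw [hre, ← integral_const_mul]
      exact integral_mono iR (iAbs.const_mul _) ptw
    have step2 : (∫ p in ΩT T, |πlim p - c p|) ≤ δ := by
      have he : (∫ p in ΩT T, |πlim p - c p|) = ∫ p in ΩT T, |f p - c p| := by
        refine setIntegral_congr_fun hΩmeas fun p hp => ?_
        simp [hfdef, indicator_of_mem hp]
      have ifc : Integrable (fun p => |f p - c p|) volume := (hfint.sub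
        (hccont.integrable_of_hasCompactSupport hcsupp)).abs
      have ifg : Integrable (fun p => |f p - g p|) volume := (hfint.sub hgint).abs
      calc (∫ p in ΩT T, |πlim p - c p|) = ∫ p in ΩT T, |f p - c p| := he
        _ ≤ ∫ p, |f p - c p| := by
            refine setIntegral_le_integral ifc (ae_of_all _ fun p => abs_nonneg _)
        _ ≤ ∫ p, |f p - g p| := integral_mono ifc ifg hclose
        _ ≤ δ := by simpa [Real.norm_eq_abs] using hgL1
      -- done
    have hR0 : 0 ≤ R πlim := by
      refine integral_nonneg fun p => ?_; positivity
    have hchain : R πlim ≤ M^2 * δ := by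
      calc R πlim ≤ M^2 * ∫ p in ΩT T, |πlim p - c p| := step1
        _ ≤ M^2 * δ := by
            refine mul_le_mul_of_nonneg_left step2 (by positivity)
    have heq : M^2 * δ = M^2 * ε0 / (M^2 + 1) := by rw [hδdef]; ring
    rw [heq, le_div_iff₀ (by positivity : (0:ℝ) < M^2 + 1)] at hchain
    generalize hgen : R πlim = r at hR0 hchain ⊢
    nlinarith [hR0, hε0, sq_nonneg M]
  -- conclude
  have hfinal : A πlim - ε0 ≤ L πlim := by
    have hk := key πlim hlm hlrange
    generalize hg1 : A πlim = a at hk ⊢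
    generalize hg2 : L πlim = l at hk ⊢
    generalize hg3 : R πlim = r at hk hRsmall ⊢
    linarith [hk, hRsmall]
  calc ((A πlim - ε0 : ℝ) : EReal) ≤ ((L πlim : ℝ) : EReal) := by exact_mod_cast hfinal
    _ ≤ liminf (fun n => energy T (πseq n)) atTop := hliminf
end
end

section
/- Let π : (0,T)×(-1,1) → [0,1] and for ε>0, w with |w|≤ε, define π_ε(t,u) = π(t, u/(1+ε)) on [−(1+ε),1+ε] and θ_w π_ε(t,u) = π_ε(t,u+w) restricted to u ∈ [−1,1]. Then Q(θ_w π_ε) ≤ (1+ε)⁻¹ Q(π), where Q(π) = (1/2) sup_{H ∈ C_c^∞((0,T)×(-1,1))} { 2∫∫ π ∂_u H − ∫∫ H² χ₀(π) } with χ₀(a)=a(1−a). -/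
open MeasureTheory Set Filter Topology

noncomputable section

/-! ### Auxiliary lemmas -/

/-- The affine homeomorphism `(t, v) ↦ (t, c v + d)`. -/
def affΦ (c d : ℝ) (hc : c ≠ 0) : ℝ × ℝ ≃ₜ ℝ × ℝ :=
  (Homeomorph.refl ℝ).prodCongr ((Homeomorph.mulLeft₀ c hc).trans (Homeomorph.addRight d))

lemma affΦ_apply (c d : ℝ) (hc : c ≠ 0) (p : ℝ × ℝ) :
    affΦ c d hc p = (p.1, c * p.2 + d) := rfl

/-- Change of variables for the affine map. -/
lemma cov_aux (c d : ℝ) (hc : 0 < c) (f : ℝ × ℝ → ℝ) :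
    ∫ p : ℝ × ℝ, f (p.1, c * p.2 + d) = c⁻¹ * ∫ p : ℝ × ℝ, f p := by
  have hc0 : c ≠ 0 := hc.ne'
  have hg : Measurable fun v : ℝ => c * v + d := (measurable_const_mul c).add_const d
  have hmapg : Measure.map (fun v : ℝ => c * v + d) volume
      = ENNReal.ofReal c⁻¹ • volume := by
    have h1 : (fun v : ℝ => c * v + d) = (fun x : ℝ => x + d) ∘ (fun x : ℝ => c * x) := rfl
    rw [h1, ← Measure.map_map (measurable_add_const d) (measurable_const_mul c),
      Real.map_volume_mul_left hc0, Measure.map_smul, map_add_right_eq_self,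
      abs_of_pos (inv_pos.2 hc)]
  haveI hsf : SigmaFinite (ENNReal.ofReal c⁻¹ • (volume : Measure ℝ)) := by
    have h2 : ENNReal.ofReal c⁻¹ • (volume : Measure ℝ) = (c⁻¹).toNNReal • volume := by
      ext s hs
      rw [Measure.smul_apply, Measure.smul_apply, ENNReal.smul_def]; rfl
    rw [h2]; infer_instance
  have hmapΦ : Measure.map (⇑(affΦ c d hc0)) volume = ENNReal.ofReal c⁻¹ • volume := by
    have hPm : ⇑(affΦ c d hc0) = Prod.map id (fun v : ℝ => c * v + d) := rfl
    rw [hPm, Measure.volume_eq_prod, ← Measure.map_prod_map _ _ measurable_id hg, Measure.map_id,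
      hmapg]
    refine Measure.prod_eq fun s t hs ht => ?_
    simp only [Measure.smul_apply, Measure.prod_prod, smul_eq_mul]
    ring
  calc ∫ p : ℝ × ℝ, f (p.1, c * p.2 + d)
      = ∫ p : ℝ × ℝ, f (affΦ c d hc0 p) := rfl
    _ = ∫ p, f p ∂(Measure.map (⇑(affΦ c d hc0)) volume) :=
        ((affΦ c d hc0).measurableEmbedding.integral_map f).symm
    _ = ∫ p, f p ∂(ENNReal.ofReal c⁻¹ • volume) := by rw [hmapΦ]
    _ = c⁻¹ * ∫ p : ℝ × ℝ, f p := by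
        rw [integral_smul_measure, ENNReal.toReal_ofReal (inv_nonneg.2 hc.le), smul_eq_mul]

lemma hasDerivAt_section {F : ℝ × ℝ → ℝ} (hF : Differentiable ℝ F) (p : ℝ × ℝ) :
    HasDerivAt (fun v => F (p.1, v)) (fderiv ℝ F p ((0 : ℝ), (1 : ℝ))) p.2 := by
  have h1 : HasFDerivAt F (fderiv ℝ F p) (p.1, p.2) := (hF p).hasFDerivAt
  have h2 : HasDerivAt (fun v : ℝ => ((p.1 : ℝ), v)) ((0 : ℝ), (1 : ℝ)) p.2 :=
    HasDerivAt.prodMk (hasDerivAt_const _ _) (hasDerivAt_id _)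
  exact h1.comp_hasDerivAt p.2 h2

lemma pderivU_eq {F : ℝ × ℝ → ℝ} (hF : Differentiable ℝ F) (p : ℝ × ℝ) :
    pderivU F p = fderiv ℝ F p ((0 : ℝ), (1 : ℝ)) :=
  (hasDerivAt_section hF p).deriv

lemma pderivU_eq_zero {F : ℝ × ℝ → ℝ} (hF : Differentiable ℝ F) {p : ℝ × ℝ}
    (hp : p ∉ tsupport F) : pderivU F p = 0 := by
  rw [pderivU_eq hF]
  have h0 : fderiv ℝ F p = 0 :=
    Function.notMem_support.mp fun h => hp (support_fderiv_subset ℝ h)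
  simp [h0]

lemma pderivU_scaled {H : ℝ × ℝ → ℝ} (hH : Differentiable ℝ H) (c d k : ℝ) (p : ℝ × ℝ) :
    pderivU (fun q => k * H (q.1, c * q.2 + d)) p
      = k * c * pderivU H (p.1, c * p.2 + d) := by
  have h1 : HasFDerivAt H (fderiv ℝ H (p.1, c * p.2 + d)) (p.1, c * p.2 + d) :=
    (hH _).hasFDerivAt
  have h2 : HasDerivAt (fun v : ℝ => ((p.1 : ℝ), c * v + d)) ((0 : ℝ), c) p.2 := by
    refine HasDerivAt.prodMk (hasDerivAt_const _ _) ?_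
    simpa using ((hasDerivAt_id p.2).const_mul c).add_const d
  have h3 : HasDerivAt (fun v => H (p.1, c * v + d))
      (fderiv ℝ H (p.1, c * p.2 + d) ((0 : ℝ), c)) p.2 := h1.comp_hasDerivAt p.2 h2
  have h4 := (h3.const_mul k).deriv
  rw [pderivU, h4, pderivU_eq hH]
  have h5 : ((0 : ℝ), c) = c • ((0 : ℝ), (1 : ℝ)) := by simp
  rw [h5, ContinuousLinearMap.map_smul, smul_eq_mul]
  ring

/-- dilation by `1+ε` and translation by `w`, `|w| ≤ ε`, decreases the
energy by the factor `(1+ε)⁻¹`: `Q(θ_w π_ε) ≤ (1+ε)⁻¹ Q(π)` where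
`(θ_w π_ε)(t,u) = π(t, (u+w)/(1+ε))`. -/
theorem stmt4 (T : ℝ) (hT : 0 < T) (ε w : ℝ) (hε : 0 < ε) (hw : |w| ≤ ε)
    (π : ℝ × ℝ → ℝ) (hπm : Measurable π) (hπ : ∀ p, π p ∈ Icc (0:ℝ) 1) :
    energy T (fun p => π (p.1, (p.2 + w) / (1 + ε))) ≤
      (((1 + ε)⁻¹ : ℝ) : EReal) * energy T π := by
  have habs := abs_le.mp hw
  set c : ℝ := 1 + ε with hcdef
  have hc : (0 : ℝ) < c := by rw [hcdef]; linarith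
  have hc0 : c ≠ 0 := ne_of_gt hc
  set d : ℝ := -w with hddef
  set π' : ℝ × ℝ → ℝ := fun p => π (p.1, (p.2 + w) / c) with hπ'def
  simp only [energy]
  refine iSup_le ?_
  rintro ⟨H, hH1, hH2, hH3⟩
  have hHdiff : Differentiable ℝ H := hH1.differentiable (by simp)
  set G : ℝ × ℝ → ℝ := fun q => c * H (q.1, c * q.2 + d) with hGdef
  -- preimage inclusion
  have hpre : (⇑(affΦ c d hc0)) ⁻¹' (ΩT T) ⊆ ΩT T := by
    rintro p hp
    simp only [affΦ_apply, ΩT, mem_preimage, mem_prod, mem_Ioo] at hp ⊢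
    obtain ⟨h1, h2, h3⟩ := hp
    refine ⟨h1, ?_, ?_⟩ <;> nlinarith [habs.1, habs.2]
  have hsubΦ : tsupport G ⊆ ⇑(affΦ c d hc0) ⁻¹' tsupport H := by
    refine closure_minimal ?_ (isClosed_closure.preimage (affΦ c d hc0).continuous)
    intro p hp
    have : H ((affΦ c d hc0) p) ≠ 0 := by
      intro h0
      apply hp
      simp only [hGdef, affΦ_apply] at h0 ⊢
      simp [h0]
    exact subset_closure (Function.mem_support.mpr this)
  have hGtest : IsTest T G := by
    refine ⟨?_, ?_, ?_⟩
    · exact contDiff_const.mul (hH1.comp (contDiff_fst.prodMk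
        ((contDiff_const.mul contDiff_snd).add contDiff_const)))
    · exact IsCompact.of_isClosed_subset ((affΦ c d hc0).isCompact_preimage.mpr hH2)
        isClosed_closure hsubΦ
    · exact hsubΦ.trans ((preimage_mono hH3).trans hpre)
  have hGdiff : Differentiable ℝ G := hGtest.1.differentiable (by simp)
  have hπ'Φ : ∀ p : ℝ × ℝ, π' (p.1, c * p.2 + d) = π p := by
    intro p
    simp only [hπ'def]
    have : (c * p.2 + d + w) / c = p.2 := by
      rw [hddef]; field_simp; ring
    rw [this]
  -- first integral identity
  have E1 : ∫ p in ΩT T, π p * pderivU G p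
      = c * ∫ p in ΩT T, π' p * pderivU H p := by
    have hvG : ∀ p, p ∉ ΩT T → π p * pderivU G p = 0 := fun p hp => by
      rw [pderivU_eq_zero hGdiff (fun hmem => hp (hGtest.2.2 hmem)), mul_zero]
    have hvH : ∀ p, p ∉ ΩT T → π' p * pderivU H p = 0 := fun p hp => by
      rw [pderivU_eq_zero hHdiff (fun hmem => hp (hH3 hmem)), mul_zero]
    rw [setIntegral_eq_integral_of_forall_compl_eq_zero hvG,
      setIntegral_eq_integral_of_forall_compl_eq_zero hvH]
    have key := cov_aux c d hc (fun q => π' q * pderivU H q)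
    have hpt : ∀ p : ℝ × ℝ, π p * pderivU G p
        = (c * c) * ((fun q => π' q * pderivU H q) (p.1, c * p.2 + d)) := by
      intro p
      have e1 : pderivU G p = c * c * pderivU H (p.1, c * p.2 + d) :=
        pderivU_scaled hHdiff c d c p
      simp only [e1, hπ'Φ p]
      ring
    calc ∫ p : ℝ × ℝ, π p * pderivU G p
        = ∫ p : ℝ × ℝ, (c * c) * ((fun q => π' q * pderivU H q) (p.1, c * p.2 + d)) :=
          integral_congr_ae (Filter.Eventually.of_forall hpt)
      _ = (c * c) * ∫ p : ℝ × ℝ, (fun q => π' q * pderivU H q) (p.1, c * p.2 + d) :=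
          integral_const_mul _ _
      _ = (c * c) * (c⁻¹ * ∫ p : ℝ × ℝ, π' p * pderivU H p) := by rw [key]
      _ = c * ∫ p : ℝ × ℝ, π' p * pderivU H p := by
          field_simp
  -- second integral identity
  have E2 : ∫ p in ΩT T, (G p)^2 * (π p * (1 - π p))
      = c * ∫ p in ΩT T, (H p)^2 * (π' p * (1 - π' p)) := by
    have hvG : ∀ p, p ∉ ΩT T → (G p)^2 * (π p * (1 - π p)) = 0 := fun p hp => by
      rw [image_eq_zero_of_notMem_tsupport (fun hmem => hp (hGtest.2.2 hmem))]
      ring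
    have hvH : ∀ p, p ∉ ΩT T → (H p)^2 * (π' p * (1 - π' p)) = 0 := fun p hp => by
      rw [image_eq_zero_of_notMem_tsupport (fun hmem => hp (hH3 hmem))]
      ring
    rw [setIntegral_eq_integral_of_forall_compl_eq_zero hvG,
      setIntegral_eq_integral_of_forall_compl_eq_zero hvH]
    have key := cov_aux c d hc (fun q => (H q)^2 * (π' q * (1 - π' q)))
    have hpt : ∀ p : ℝ × ℝ, (G p)^2 * (π p * (1 - π p))
        = (c * c) * ((fun q => (H q)^2 * (π' q * (1 - π' q))) (p.1, c * p.2 + d)) := by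
      intro p
      simp only [hGdef, hπ'Φ p]
      ring
    calc ∫ p : ℝ × ℝ, (G p)^2 * (π p * (1 - π p))
        = ∫ p : ℝ × ℝ, (c * c) * ((fun q => (H q)^2 * (π' q * (1 - π' q))) (p.1, c * p.2 + d)) :=
          integral_congr_ae (Filter.Eventually.of_forall hpt)
      _ = (c * c) * ∫ p : ℝ × ℝ,
            (fun q => (H q)^2 * (π' q * (1 - π' q))) (p.1, c * p.2 + d) :=
          integral_const_mul _ _
      _ = (c * c) * (c⁻¹ * ∫ p : ℝ × ℝ, (H p)^2 * (π' p * (1 - π' p))) := by rw [key]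
      _ = c * ∫ p : ℝ × ℝ, (H p)^2 * (π' p * (1 - π' p)) := by
          field_simp
  -- conclude
  set vH : ℝ := (∫ p in ΩT T, π' p * pderivU H p)
      - (1/2) * ∫ p in ΩT T, (H p)^2 * (π' p * (1 - π' p)) with hvHdef
  set vG : ℝ := (∫ p in ΩT T, π p * pderivU G p)
      - (1/2) * ∫ p in ΩT T, (G p)^2 * (π p * (1 - π p)) with hvGdef
  have hval : vH = c⁻¹ * vG := by
    rw [hvHdef, hvGdef, E1, E2]
    field_simp
  have hle : ((vG : ℝ) : EReal) ≤ energy T π := by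
    rw [energy]
    exact le_iSup (fun K : {K : ℝ × ℝ → ℝ // IsTest T K} =>
      (((∫ p in ΩT T, π p * pderivU K.1 p)
        - (1/2) * ∫ p in ΩT T, (K.1 p)^2 * (π p * (1 - π p)) : ℝ) : EReal)) ⟨G, hGtest⟩
  show ((vH : ℝ) : EReal) ≤ ((c⁻¹ : ℝ) : EReal) * energy T π
  calc ((vH : ℝ) : EReal) = ((c⁻¹ * vG : ℝ) : EReal) := by rw [hval]
    _ = ((c⁻¹ : ℝ) : EReal) * ((vG : ℝ) : EReal) := EReal.coe_mul _ _
    _ ≤ ((c⁻¹ : ℝ) : EReal) * energy T π := by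
        refine mul_le_mul_of_nonneg_left hle ?_
        exact EReal.coe_nonneg.mpr (inv_nonneg.2 hc.le)
end
end

section
/- On a measure space (Ω,μ,F), for any f ∈ L¹(μ) there exists an increasing convex function Ψ : ℝ₊ → ℝ₊ with lim_{x→∞} Ψ(x)/x = ∞ and ∫ Ψ(|f|) dμ < ∞. -/
open MeasureTheory Set Filter Topology

/-- for any `f ∈ L¹(μ)` there is an increasing convex superlinear
`Ψ : ℝ₊ → ℝ₊` with `∫ Ψ(|f|) dμ < ∞`. -/
theorem stmt5 {α : Type*} [MeasurableSpace α] (μ : Measure α) (f : α → ℝ)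
    (hf : Integrable f μ) :
    ∃ Ψ : ℝ → ℝ, (∀ x ≥ (0:ℝ), 0 ≤ Ψ x) ∧ MonotoneOn Ψ (Ici 0) ∧
      ConvexOn ℝ (Ici 0) Ψ ∧ Tendsto (fun x => Ψ x / x) atTop atTop ∧
      Integrable (fun a => Ψ |f a|) μ := by
  have hfnorm : Integrable (fun a => |f a|) μ := hf.abs
  -- truncated tail integrals tend to 0
  have hT : Tendsto (fun n : ℕ => ∫ a, max (|f a| - n) 0 ∂μ) atTop (𝓝 0) := by
    have h := tendsto_integral_of_dominated_convergence
      (F := fun (n : ℕ) (a : α) => max (|f a| - n) 0) (f := fun _ => (0:ℝ))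
      (fun a => |f a|) ?_ hfnorm ?_ ?_
    · simpa using h
    · exact fun n => (hfnorm.1.sub aestronglyMeasurable_const).sup aestronglyMeasurable_const
    · intro n
      filter_upwards with a
      rw [Real.norm_eq_abs, abs_of_nonneg (le_max_right _ _)]
      exact max_le (by linarith [abs_nonneg (f a), Nat.cast_nonneg (α := ℝ) n]) (abs_nonneg _)
      
    · filter_upwards with a
      have : ∀ᶠ n : ℕ in atTop, max (|f a| - n) 0 = 0 := by
        filter_upwards [eventually_ge_atTop ⌈|f a|⌉₊] with n hn
        have : |f a| ≤ (n : ℝ) := le_trans (Nat.le_ceil _) (by exact_mod_cast hn)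
        simp [max_eq_right, sub_nonpos.2 this]
      exact Tendsto.congr' (this.mono fun n hn => hn.symm) tendsto_const_nhds
  -- choose thresholds
  have hchoice : ∀ n : ℕ, ∃ m : ℕ, (n : ℝ) ≤ m ∧
      ∫ a, max (|f a| - m) 0 ∂μ ≤ (1/2 : ℝ)^n := by
    intro n
    obtain ⟨m, hm1, hm2⟩ := ((eventually_ge_atTop n).and
      (hT.eventually_lt_const (by positivity : (0:ℝ) < (1/2:ℝ)^n))).exists
    exact ⟨m, by exact_mod_cast hm1, hm2.le⟩
  choose c hc1 hc2 using hchoice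
  set g : ℕ → ℝ → ℝ := fun n x => max (x - c n) 0 with hg
  have hg0 : ∀ n x, 0 ≤ g n x := fun n x => le_max_right _ _
  have hgn : ∀ n : ℕ, ∀ x : ℝ, x ≤ n → g n x = 0 := by
    intro n x hx
    have : x - c n ≤ 0 := by linarith [hc1 n]
    simp [hg, max_eq_right this]
  have hgmono : ∀ n, Monotone (g n) := fun n x y hxy =>
    max_le_max (by linarith) le_rfl
  have hsum : ∀ x : ℝ, Summable (fun n => g n x) := by
    intro x
    apply summable_of_ne_finset_zero (s := Finset.range ⌈x⌉₊)
    intro n hn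
    rw [Finset.mem_range, not_lt] at hn
    exact hgn n x (le_trans (Nat.le_ceil _) (by exact_mod_cast hn))
  set Ψ : ℝ → ℝ := fun x => ∑' n, g n x with hΨ
  have hΨ0 : ∀ x, 0 ≤ Ψ x := fun x => tsum_nonneg (fun n => hg0 n x)
  have hΨmono : Monotone Ψ := fun x y hxy =>
    Summable.tsum_le_tsum (fun n => hgmono n hxy) (hsum x) (hsum y)
  refine ⟨Ψ, fun x _ => hΨ0 x, hΨmono.monotoneOn _, ?_, ?_, ?_⟩
  · -- convexity
    refine ⟨convex_Ici 0, ?_⟩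
    intro x _ y _ t s ht hs hts
    have key : ∀ n, g n (t • x + s • y) ≤ t * g n x + s * g n y := by
      intro n
      have h1 : x - c n ≤ g n x := le_max_left _ _
      have h2 : y - c n ≤ g n y := le_max_left _ _
      refine max_le ?_ (by positivity)
      have : t • x + s • y - c n = t * (x - c n) + s * (y - c n) := by
        simp only [smul_eq_mul]; ring_nf; nlinarith [hts]
      rw [this]
      have := mul_le_mul_of_nonneg_left h1 ht
      have := mul_le_mul_of_nonneg_left h2 hs
      linarith
    calc Ψ (t • x + s • y) ≤ ∑' n, (t * g n x + s * g n y) :=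
          Summable.tsum_le_tsum key (hsum _) (((hsum x).mul_left t).add ((hsum y).mul_left s))
      _ = t • Ψ x + s • Ψ y := by
          rw [Summable.tsum_add ((hsum x).mul_left t) ((hsum y).mul_left s),
            tsum_mul_left, tsum_mul_left]
          simp [hΨ, smul_eq_mul]
  · -- superlinear
    rw [tendsto_atTop]
    intro b
    set N : ℕ := ⌈b⌉₊ + 1 with hN
    have hNb : b + 1 ≤ (N : ℝ) := by
      have := Nat.le_ceil b
      push_cast [hN]; linarith
    set S : ℝ := ∑ n ∈ Finset.range N, (c n : ℝ) with hS
    have hS0 : 0 ≤ S := Finset.sum_nonneg (fun n _ => Nat.cast_nonneg _)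
    filter_upwards [eventually_ge_atTop (max S 1)] with x hx
    have hx1 : (1:ℝ) ≤ x := le_trans (le_max_right _ _) hx
    have hxS : S ≤ x := le_trans (le_max_left _ _) hx
    have hlow : (N : ℝ) * x - S ≤ Ψ x := by
      have h1 : ∑ n ∈ Finset.range N, (x - c n) ≤ ∑ n ∈ Finset.range N, g n x :=
        Finset.sum_le_sum (fun n _ => le_max_left _ _)
      have h2 : ∑ n ∈ Finset.range N, g n x ≤ Ψ x :=
        Summable.sum_le_tsum _ (fun n _ => hg0 n x) (hsum x)
      have h3 : ∑ n ∈ Finset.range N, (x - (c n : ℝ)) = (N:ℝ) * x - S := by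
        rw [Finset.sum_sub_distrib]
        simp [hS, mul_comm]
      linarith
    have hx0 : (0:ℝ) < x := by linarith
    rw [le_div_iff₀ hx0]
    have : S / x ≤ 1 := (div_le_one hx0).2 hxS
    nlinarith
  · -- integrability
    have hmeas : AEStronglyMeasurable (fun a => Ψ |f a|) μ := by
      have : Measurable Ψ := hΨmono.measurable
      exact (this.comp_aemeasurable hfnorm.1.aemeasurable).aestronglyMeasurable
    have hFint : ∀ n : ℕ, Integrable (fun a => g n |f a|) μ := by
      intro n
      refine hfnorm.mono ?_ ?_
      · exact ((hfnorm.1.sub aestronglyMeasurable_const).sup aestronglyMeasurable_const)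
      · filter_upwards with a
        rw [Real.norm_eq_abs, Real.norm_eq_abs, abs_of_nonneg (hg0 n _), abs_abs]
        exact max_le (by linarith [abs_nonneg (f a), Nat.cast_nonneg (α := ℝ) (c n)])
          (abs_nonneg _)
    refine ⟨hmeas, ?_⟩
    rw [hasFiniteIntegral_iff_ofReal (by filter_upwards with a using hΨ0 _)]
    have hkey : ∀ a, ENNReal.ofReal (Ψ |f a|) = ∑' n, ENNReal.ofReal (g n |f a|) :=
      fun a => ENNReal.ofReal_tsum_of_nonneg (fun n => hg0 n _) (hsum _)
    simp_rw [hkey]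
    have hmeas2 : ∀ n : ℕ, AEMeasurable (fun a => ENNReal.ofReal (g n |f a|)) μ := fun n =>
      ENNReal.measurable_ofReal.comp_aemeasurable
        ((hfnorm.1.aemeasurable.sub aemeasurable_const).sup aemeasurable_const)
    rw [lintegral_tsum hmeas2]
    have hbound : ∀ n : ℕ, ∫⁻ a, ENNReal.ofReal (g n |f a|) ∂μ
        ≤ ENNReal.ofReal ((1/2:ℝ)^n) := by
      intro n
      rw [← ofReal_integral_eq_lintegral_ofReal (hFint n)
        (by filter_upwards with a using hg0 n _)]
      exact ENNReal.ofReal_le_ofReal (hc2 n)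
    calc ∑' n, ∫⁻ a, ENNReal.ofReal (g n |f a|) ∂μ
        ≤ ∑' n : ℕ, ENNReal.ofReal ((1/2:ℝ)^n) := ENNReal.tsum_le_tsum hbound
      _ = ENNReal.ofReal (∑' n : ℕ, (1/2:ℝ)^n) :=
          (ENNReal.ofReal_tsum_of_nonneg (fun n => by positivity)
            (summable_geometric_of_lt_one (by norm_num) (by norm_num))).symm
      _ < ⊤ := ENNReal.ofReal_lt_top
end

section
/- Let πₙ, π : (0,T)×(-1,1) → [0,1] with πₙ → π pointwise a.e., and suppose χ : [0,1] → ℝ₊ is continuous with C₀⁻¹χ₀ ≤ χ ≤ C₀χ₀, where χ₀(a)=a(1−a). Fix t and assume ∫₋₁¹ χ₀(π(t,u))⁻¹ du < ∞ and πₙ(t,·) = (1−εₙ)π(t,·) + εₙρ(t,·) with εₙ → 0 and ρ taking values in [0,1]. Then ∫₋₁¹ χ(πₙ(t,u))⁻¹ du → ∫₋₁¹ χ(π(t,u))⁻¹ du. -/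
open MeasureTheory Set Filter Topology ENNReal

/-- if `πₙ = (1-εₙ)π + εₙρ` with `εₙ → 0`, `χ` continuous and
comparable to `χ₀(a)=a(1-a)`, and `∫ 1/χ₀(π) < ∞` (extended sense), then
`∫ χ(πₙ)⁻¹ → ∫ χ(π)⁻¹`. -/
theorem stmt10 (χ : ℝ → ℝ) (hχc : Continuous χ) (C₀ : ℝ) (hC₀ : 1 ≤ C₀)
    (hχ : ∀ a ∈ Icc (0:ℝ) 1, C₀⁻¹ * (a * (1 - a)) ≤ χ a ∧ χ a ≤ C₀ * (a * (1 - a)))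
    (π ρ : ℝ → ℝ) (hπm : Measurable π) (hρm : Measurable ρ)
    (hπ : ∀ u ∈ Ioo (-1:ℝ) 1, π u ∈ Icc (0:ℝ) 1)
    (hρ : ∀ u ∈ Ioo (-1:ℝ) 1, ρ u ∈ Icc (0:ℝ) 1)
    (hfin : ∫⁻ u in Ioo (-1:ℝ) 1, (ENNReal.ofReal (π u * (1 - π u)))⁻¹ < ⊤)
    (εn : ℕ → ℝ) (hεn : ∀ n, εn n ∈ Icc (0:ℝ) 1) (hεto : Tendsto εn atTop (𝓝 0)) :
    Tendsto (fun n => ∫ u in Ioo (-1:ℝ) 1, (χ ((1 - εn n) * π u + εn n * ρ u))⁻¹)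
      atTop (𝓝 (∫ u in Ioo (-1:ℝ) 1, (χ (π u))⁻¹)) := by
  set μ := (volume : Measure ℝ).restrict (Ioo (-1:ℝ) 1) with hμ
  have hC₀pos : (0:ℝ) < C₀ := lt_of_lt_of_le one_pos hC₀
  have hmeas0 : Measurable fun u => (ENNReal.ofReal (π u * (1 - π u)))⁻¹ := by
    exact (ENNReal.measurable_ofReal.comp (hπm.mul ((measurable_const.sub hπm)))).inv
  have hpos : ∀ᵐ u ∂μ, 0 < π u * (1 - π u) := by
    have := ae_lt_top hmeas0 hfin.ne
    filter_upwards [this] with u hu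
    rw [ENNReal.inv_lt_top, ENNReal.ofReal_pos] at hu
    exact hu
  have hmemπ : ∀ᵐ u ∂μ, π u ∈ Icc (0:ℝ) 1 := by
    filter_upwards [ae_restrict_mem measurableSet_Ioo] with u hu using hπ u hu
  have hmemρ : ∀ᵐ u ∂μ, ρ u ∈ Icc (0:ℝ) 1 := by
    filter_upwards [ae_restrict_mem measurableSet_Ioo] with u hu using hρ u hu
  obtain ⟨N, hN⟩ : ∃ N, ∀ n ≥ N, εn n ≤ 1/2 := by
    have := hεto.eventually (eventually_le_nhds (by norm_num : (0:ℝ) < 1/2))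
    exact eventually_atTop.mp this
  rw [← tendsto_add_atTop_iff_nat N]
  set g : ℝ → ℝ := fun u => 2 * C₀ * (π u * (1 - π u))⁻¹ with hg
  -- key lower bound for χ(πₙ)
  have key : ∀ (ε : ℝ), ε ∈ Icc (0:ℝ) 1 → ε ≤ 1/2 → ∀ u, 0 < π u * (1 - π u) →
      π u ∈ Icc (0:ℝ) 1 → ρ u ∈ Icc (0:ℝ) 1 →
      (2*C₀)⁻¹ * (π u * (1 - π u)) ≤ χ ((1-ε) * π u + ε * ρ u) := by
    intro ε hε hε2 u hu hπu hρu
    set a := π u with ha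
    set b := ρ u with hb
    have hc : (1-ε) * a + ε * b ∈ Icc (0:ℝ) 1 := by
      constructor
      · nlinarith [hε.1, hε.2, hπu.1, hρu.1]
      · nlinarith [hε.1, hε.2, hπu.2, hρu.2]
    have h1 := (hχ _ hc).1
    have hC0inv : (0:ℝ) < C₀⁻¹ := inv_pos.mpr hC₀pos
    have hχ0 : (1-ε) * (a*(1-a)) ≤ ((1-ε)*a + ε*b) * (1 - ((1-ε)*a + ε*b)) := by
      nlinarith [mul_nonneg (mul_nonneg hε.1 (by linarith [hε.2] : (0:ℝ) ≤ 1 - ε)) (sq_nonneg (a - b)),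
        mul_nonneg (mul_nonneg hε.1 hρu.1) (by linarith [hρu.2] : (0:ℝ) ≤ 1 - b)]
    have h2 : C₀⁻¹ * ((1-ε)*(a*(1-a))) ≤ χ ((1-ε)*a + ε*b) := by
      refine le_trans ?_ h1
      nlinarith
    refine le_trans ?_ h2
    have hinv : (2*C₀)⁻¹ = C₀⁻¹ * (1/2) := by
      rw [mul_inv]; ring
    rw [hinv]
    have h3 : (1/2 : ℝ) ≤ 1 - ε := by linarith
    nlinarith [mul_nonneg (mul_nonneg hC0inv.le (by linarith : (0:ℝ) ≤ 1 - ε - 1/2)) hu.le]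
  -- integrability of the dominating function
  have hgmeas : Measurable g := (measurable_const.mul ((hπm.mul (measurable_const.sub hπm)).inv))
  have hgint : Integrable g μ := by
    refine ⟨hgmeas.aestronglyMeasurable, ?_⟩
    rw [hasFiniteIntegral_iff_norm]
    have heq : ∫⁻ u, ENNReal.ofReal ‖g u‖ ∂μ
        = ∫⁻ u, ENNReal.ofReal (2*C₀) * (ENNReal.ofReal (π u * (1 - π u)))⁻¹ ∂μ := by
      apply lintegral_congr_ae
      filter_upwards [hpos] with u hu
      have hg0 : 0 ≤ g u := by
        have := hu.le
        positivity
      rw [Real.norm_eq_abs, abs_of_nonneg hg0, hg]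
      simp only
      rw [ENNReal.ofReal_mul (by positivity), ENNReal.ofReal_inv_of_pos hu]
    rw [heq, lintegral_const_mul _ hmeas0]
    exact ENNReal.mul_lt_top ENNReal.ofReal_lt_top hfin
  refine tendsto_integral_of_dominated_convergence g ?_ hgint ?_ ?_
  · intro n
    have hm : Measurable fun u => (1 - εn (n+N)) * π u + εn (n+N) * ρ u :=
      (hπm.const_mul _).add (hρm.const_mul _)
    exact ((hχc.measurable.comp hm).inv).aestronglyMeasurable
  · intro n
    filter_upwards [hpos, hmemπ, hmemρ] with u hu hπu hρu
    have hε := hεn (n+N)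
    have hε2 : εn (n+N) ≤ 1/2 := hN _ (Nat.le_add_left N n)
    have hk := key _ hε hε2 u hu hπu hρu
    have hlow : 0 < (2*C₀)⁻¹ * (π u * (1 - π u)) := by positivity
    have hχpos : 0 < χ ((1 - εn (n+N)) * π u + εn (n+N) * ρ u) := lt_of_lt_of_le hlow hk
    rw [Real.norm_eq_abs, abs_of_nonneg (inv_nonneg.mpr hχpos.le)]
    calc (χ ((1 - εn (n+N)) * π u + εn (n+N) * ρ u))⁻¹
        ≤ ((2*C₀)⁻¹ * (π u * (1 - π u)))⁻¹ := inv_anti₀ hlow hk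
      _ = g u := by rw [mul_inv, inv_inv, hg]
  · filter_upwards [hpos, hmemπ] with u hu hπu
    have hχπ : 0 < χ (π u) :=
      lt_of_lt_of_le (by positivity : (0:ℝ) < C₀⁻¹ * (π u * (1 - π u))) (hχ _ hπu).1
    have hε' : Tendsto (fun n => εn (n+N)) atTop (𝓝 0) :=
      hεto.comp (tendsto_add_atTop_nat N)
    have h1 : Tendsto (fun n => (1 - εn (n+N)) * π u + εn (n+N) * ρ u) atTop (𝓝 (π u)) := by
      have hA : Tendsto (fun n => (1 - εn (n+N)) * π u) atTop (𝓝 ((1 - 0) * π u)) :=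
        (Tendsto.sub tendsto_const_nhds hε').mul_const (π u)
      have hB : Tendsto (fun n => εn (n+N) * ρ u) atTop (𝓝 (0 * ρ u)) :=
        hε'.mul_const (ρ u)
      simpa using hA.add hB
    exact ((hχc.tendsto _).comp h1).inv₀ (ne_of_gt hχπ)
end

section
/- There exists a constant C₁ > 0 such that for all λ ≥ 1 and all u ∈ [−1+λ^{−1/2}, 1−λ^{−1/2}], ∫₋₁ᵘ cosh(√λ(1+v)) dv ≤ C₁ ∫₋₁ᵘ sinh(√λ(1+v)) dv. -/
open MeasureTheory Set Filter Topology


lemma int_cosh (a b : ℝ) : ∫ x in a..b, Real.cosh x = Real.sinh b - Real.sinh a := by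
  apply intervalIntegral.integral_eq_sub_of_hasDerivAt
  · exact fun x _ => Real.hasDerivAt_sinh x
  · exact (Real.continuous_cosh.intervalIntegrable a b)

lemma int_sinh (a b : ℝ) : ∫ x in a..b, Real.sinh x = Real.cosh b - Real.cosh a := by
  apply intervalIntegral.integral_eq_sub_of_hasDerivAt
  · exact fun x _ => Real.hasDerivAt_cosh x
  · exact (Real.continuous_sinh.intervalIntegrable a b)

lemma sinh_le_four_cosh_sub_one {t : ℝ} (ht : 1 ≤ t) :
    Real.sinh t ≤ 4 * (Real.cosh t - 1) := by
  rw [Real.sinh_eq, Real.cosh_eq]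
  have h1 : Real.exp 1 ≤ Real.exp t := Real.exp_le_exp.2 ht
  have h2 : (2.7182818283 : ℝ) < Real.exp 1 := Real.exp_one_gt_d9
  have h3 : (0:ℝ) < Real.exp (-t) := Real.exp_pos _
  nlinarith

/-- there is `C₁ > 0` such that for all `λ ≥ 1` and
`u ∈ [-1+λ^{-1/2}, 1-λ^{-1/2}]`,
`∫₋₁ᵘ cosh(√λ(1+v)) dv ≤ C₁ ∫₋₁ᵘ sinh(√λ(1+v)) dv`. -/
theorem stmt14 : ∃ C₁ : ℝ, 0 < C₁ ∧ ∀ lam : ℝ, 1 ≤ lam →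
    ∀ u ∈ Icc (-1 + (Real.sqrt lam)⁻¹) (1 - (Real.sqrt lam)⁻¹),
      ∫ v in (-1:ℝ)..u, Real.cosh (Real.sqrt lam * (1 + v)) ≤
        C₁ * ∫ v in (-1:ℝ)..u, Real.sinh (Real.sqrt lam * (1 + v)) := by
  refine ⟨4, by norm_num, fun lam hlam u hu => ?_⟩
  set s := Real.sqrt lam with hs
  have hs1 : 1 ≤ s := by
    rw [hs, show (1:ℝ) = Real.sqrt 1 by simp]
    exact Real.sqrt_le_sqrt hlam
  have hspos : 0 < s := lt_of_lt_of_le one_pos hs1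
  have hsne : s ≠ 0 := ne_of_gt hspos
  have hrw : ∀ v : ℝ, s * (1 + v) = s * v + s := fun v => by ring
  have hc : (∫ v in (-1:ℝ)..u, Real.cosh (s * (1 + v)))
      = s⁻¹ * Real.sinh (s * u + s) := by
    simp_rw [hrw]
    rw [intervalIntegral.integral_comp_mul_add Real.cosh hsne s]
    rw [int_cosh]
    simp
  have hsi : (∫ v in (-1:ℝ)..u, Real.sinh (s * (1 + v)))
      = s⁻¹ * (Real.cosh (s * u + s) - 1) := by
    simp_rw [hrw]
    rw [intervalIntegral.integral_comp_mul_add Real.sinh hsne s]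
    rw [int_sinh]
    simp
  rw [hc, hsi]
  have ht : 1 ≤ s * u + s := by
    have h1 : -1 + s⁻¹ ≤ u := hu.1
    have : s * (-1 + s⁻¹) ≤ s * u := by
      exact mul_le_mul_of_nonneg_left h1 hspos.le
    have hinv : s * s⁻¹ = 1 := mul_inv_cancel₀ hsne
    nlinarith
  have key := sinh_le_four_cosh_sub_one ht
  have hinv : 0 ≤ s⁻¹ := inv_nonneg.2 hspos.le
  calc s⁻¹ * Real.sinh (s * u + s) ≤ s⁻¹ * (4 * (Real.cosh (s * u + s) - 1)) :=
        mul_le_mul_of_nonneg_left key hinv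
    _ = 4 * (s⁻¹ * (Real.cosh (s * u + s) - 1)) := by ring
end
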